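/- arXiv:2504.20456 — 2 statements merged into one kernel-verified Lean document; each statement's English description precedes it below -/
import Mathlib

section
/- Let p and q be probability mass functions on a finite set X. Define the acceptance-resampling scheme: sample x̃ ~ p, sample r ~ Uniform[0,1], accept x̃ if r < min(1, q(x̃)/p(x̃)); otherwise resample x from the normalized positive part distribution (q - p)_+ defined by (q-p)_+(x) = max(0, q(x)-p(x)) / Σ_{x'} max(0, q(x')-p(x')). Then the output of this scheme is distributed exactly according to q. -/
/-- Single-token acceptance-resampling scheme outputs exactly `q`. -/
theorem stmt_0 {X : Type*} [Fintype X] [Nonempty X]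
    (p q : X → ℝ)
    (hp0 : ∀ x, 0 ≤ p x) (hq0 : ∀ x, 0 ≤ q x)
    (hp1 : ∑ x, p x = 1) (hq1 : ∑ x, q x = 1)
    (hpq : p ≠ q) :
    ∀ x : X,
      p x * min 1 (q x / p x)
        + (1 - ∑ x', min (p x') (q x'))
          * (max 0 (q x - p x) / ∑ x', max 0 (q x' - p x')) = q x := by
  have hmin : ∀ x, p x * min 1 (q x / p x) = min (p x) (q x) := by
    intro x
    rcases eq_or_lt_of_le (hp0 x) with h | h
    · simp [← h, min_eq_left (hq0 x)]
    · rw [mul_min_of_nonneg _ _ h.le, mul_one, mul_div_cancel₀ _ (ne_of_gt h)]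
  have hmax : ∀ x, max 0 (q x - p x) = q x - min (p x) (q x) := by
    intro x
    rcases le_total (p x) (q x) with h | h
    · rw [min_eq_left h, max_eq_right (by linarith)]
    · rw [min_eq_right h, max_eq_left (by linarith)]; ring
  have hsum : ∑ x', max 0 (q x' - p x') = 1 - ∑ x', min (p x') (q x') := by
    simp only [hmax]
    rw [Finset.sum_sub_distrib, hq1]
  have hS : (1 - ∑ x', min (p x') (q x')) ≠ 0 := by
    intro h0
    have h1 : ∑ x', min (p x') (q x') = ∑ x', q x' := by rw [hq1]; linarith
    have h2 : ∀ x ∈ Finset.univ, min (p x) (q x) = q x :=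
      (Finset.sum_eq_sum_iff_of_le (fun x _ => min_le_right (p x) (q x))).mp h1
    have h3 : ∀ x, q x ≤ p x := fun x => by
      have := h2 x (Finset.mem_univ x); rw [min_eq_right_iff] at this; exact this
    have h4 : ∑ x', q x' = ∑ x', p x' := by rw [hp1, hq1]
    have h5 := (Finset.sum_eq_sum_iff_of_le (fun x _ => h3 x)).mp h4
    exact hpq (funext fun x => (h5 x (Finset.mem_univ x)).symm)
  intro x
  rw [hmin, hsum, mul_comm, div_mul_cancel₀ _ hS, hmax]
  ring
end

section
/- Single-token speculative decoding correctness: sample x̃ ~ p; with probability min(1, q(x̃)/p(x̃)) output x̃; otherwise output a fresh sample from (q - p)_+ (the normalized positive part). For every x ∈ X, the probability of outputting x equals min(p(x), q(x)) + max(0, q(x) - p(x)) = q(x). -/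
/-- Single-token speculative decoding correctness: for every `x`, the output
probability `p(x)·min(1, q(x)/p(x)) + (1 - ∑ min(p,q))·(q-p)₊(x)` equals
`min(p x, q x) + max 0 (q x - p x) = q x`. -/
theorem stmt_12 {X : Type*} [Fintype X]
    (p q : X → ℝ)
    (hp0 : ∀ x, 0 ≤ p x) (hq0 : ∀ x, 0 ≤ q x)
    (hp1 : ∑ x, p x = 1) (hq1 : ∑ x, q x = 1)
    (hpq : p ≠ q) :
    ∀ x : X,
      p x * (if p x = 0 then 1 else min 1 (q x / p x))
          + (1 - ∑ x', min (p x') (q x'))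
            * (max 0 (q x - p x) / ∑ x', max 0 (q x' - p x'))
        = min (p x) (q x) + max 0 (q x - p x) ∧
      min (p x) (q x) + max 0 (q x - p x) = q x := by
  -- first: pointwise identities
  have hmin : ∀ x, p x * (if p x = 0 then 1 else min 1 (q x / p x)) = min (p x) (q x) := by
    intro x
    by_cases h : p x = 0
    · simp [h, min_eq_left (hq0 x)]
    · have hpos : 0 < p x := lt_of_le_of_ne (hp0 x) (Ne.symm h)
      rw [if_neg h, mul_min_of_nonneg _ _ (hp0 x), mul_one,
        mul_div_cancel₀ _ h]
  have hsum : (1 - ∑ x', min (p x') (q x')) = ∑ x', max 0 (q x' - p x') := by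
    rw [← hq1, ← Finset.sum_sub_distrib]
    congr 1; ext x
    rcases le_total (p x) (q x) with h | h
    · rw [min_eq_left h, max_eq_right (by linarith)]
    · rw [min_eq_right h, max_eq_left (by linarith)]; ring
  have hden : 0 < ∑ x', max 0 (q x' - p x') := by
    have hne : ∃ x, q x - p x ≠ 0 := by
      by_contra h
      push_neg at h
      exact hpq (funext fun x => by have := h x; linarith)
    -- since sums equal, some q x > p x
    by_contra h
    push_neg at h
    have hz : ∑ x', max 0 (q x' - p x') = 0 :=
      le_antisymm h (Finset.sum_nonneg fun x _ => le_max_left _ _)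
    have hle : ∀ x, q x ≤ p x := by
      intro x
      have := Finset.sum_eq_zero_iff_of_nonneg
        (fun x _ => le_max_left 0 (q x - p x)) |>.mp hz x (Finset.mem_univ x)
      by_contra hc
      push_neg at hc
      have : max 0 (q x - p x) = q x - p x := max_eq_right (by linarith)
      linarith [this ▸ ‹max 0 (q x - p x) = 0›]
    have heq : ∀ x, q x = p x := by
      intro x
      by_contra hc
      have hlt : q x < p x := lt_of_le_of_ne (hle x) hc
      have : ∑ x', q x' < ∑ x', p x' :=
        Finset.sum_lt_sum (fun i _ => hle i) ⟨x, Finset.mem_univ x, hlt⟩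
      rw [hp1, hq1] at this; exact lt_irrefl 1 this
    exact hpq (funext fun x => (heq x).symm)
  intro x
  constructor
  · rw [hmin, hsum, mul_div_assoc']
    rw [mul_comm, mul_div_assoc, div_self (ne_of_gt hden), mul_one]
  · rcases le_total (p x) (q x) with h | h
    · rw [min_eq_left h, max_eq_right (by linarith)]; ring
    · rw [min_eq_right h, max_eq_left (by linarith)]; ring
end
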